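/- Fix n, K ≥ 1, a symmetric n×n real matrix L, continuous functions h_0, …, h_K : ℝ → ℝ with H_t := ∑_{k=0}^K h_k(t) • L^k, and a continuous function g : ℝ → ℝ. Write Ψ_t := exp(∫_0^t H_τ dτ) and, for t₁ ≤ t₂, K(t₁,t₂) := Ψ_{t₁} * (∫_0^{t₁} g(τ)² • (Ψ_τ⁻¹ * Ψ_τ⁻¹) dτ) * Ψ_{t₂}ᵀ. Then: (i) for fixed t₂ and any t₁ < t₂, the function t₁ ↦ K(t₁,t₂) has derivative H_{t₁} * K(t₁,t₂) + g(t₁)² • (Ψ_{t₁}⁻¹ * Ψ_{t₂}ᵀ) at t₁; (ii) for fixed t₁ and any t₂ > t₁, the function t₂ ↦ K(t₁,t₂) has derivative K(t₁,t₂) * H_{t₂}ᵀ at t₂. -/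

import Mathlib

/-!
The drifts `H_t = ∑ₖ hₖ(t) Lᵏ` commute pairwise, hence so do their integrals `B_t = ∫₀ᵗ H`
(commutation passes through the integral). Writing `exp B_u = exp B_t · exp (B_u - B_t)` then
gives `Ψ' = H Ψ = Ψ H`, and the first partial derivative of `K` follows from the product rule
together with the fundamental theorem of calculus for the inner integral. For the second one,
symmetry of `L` makes every `H_t`, `B_t` and hence `Ψ_t` symmetric, so `K(t₁, ·)` is a constant
matrix times `Ψ`.
-/

open MeasureTheory Matrix NormedSpace

attribute [local instance] Matrix.normedAddCommGroup Matrix.normedSpace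

theorem Commute.sum_smul_pow_sum_smul_pow {R A ι κ : Type*} [CommSemiring R] [Semiring A]
    [Algebra R A] (x : A) (s : Finset ι) (t : Finset κ) (a : ι → R) (b : κ → R) (d : ι → ℕ)
    (e : κ → ℕ) : Commute (∑ i ∈ s, a i • x ^ d i) (∑ j ∈ t, b j • x ^ e j) :=
  Commute.sum_left _ _ _ fun _ _ => Commute.sum_right _ _ _ fun _ _ =>
    (((Commute.refl x).pow_pow _ _).smul_right _).smul_left _

theorem HasDerivAt.exp_of_commute {𝕂 𝔸 : Type*} [RCLike 𝕂] [NormedRing 𝔸] [NormedAlgebra 𝕂 𝔸]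
    [NormedAlgebra ℚ 𝔸] [CompleteSpace 𝔸] {f : 𝕂 → 𝔸} {f' : 𝔸} {t : 𝕂} (hf : HasDerivAt f f' t)
    (hcomm : ∀ u, Commute (f t) (f u)) :
    HasDerivAt (fun u => NormedSpace.exp (f u)) (NormedSpace.exp (f t) * f') t := by
  have hsplit : (fun u => NormedSpace.exp (f u)) =
      fun u => NormedSpace.exp (f t) * NormedSpace.exp (f u - f t) := by
    funext u
    rw [← NormedSpace.exp_add_of_commute ((hcomm u).sub_right (Commute.refl _)), add_sub_cancel]
  have hexp_zero : HasFDerivAt NormedSpace.exp (1 : 𝔸 →L[𝕂] 𝔸) (f t - f t) := by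
    rw [sub_self]
    exact hasFDerivAt_exp_zero
  rw [hsplit]
  exact (hexp_zero.comp_hasDerivAt t (hf.sub_const (f t))).const_mul _

namespace Matrix

variable {m : Type*} [Fintype m]

theorem IsSymm.intervalIntegral {f : ℝ → Matrix m m ℝ} (hf : Continuous f)
    (hsymm : ∀ τ, (f τ).IsSymm) (a b : ℝ) : (∫ τ in a..b, f τ).IsSymm := by
  let φ : Matrix m m ℝ →L[ℝ] Matrix m m ℝ :=
    LinearMap.toContinuousLinearMap (transposeLinearEquiv m m ℝ ℝ).toLinearMap
  have h : (∫ τ in a..b, f τ)ᵀ = ∫ τ in a..b, (f τ)ᵀ :=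
    (φ.intervalIntegral_comp_comm (hf.intervalIntegrable a b)).symm
  simp only [(hsymm _).eq] at h
  exact h

variable [DecidableEq m]

theorem IsSymm.sum_smul_pow {R ι : Type*} [CommSemiring R] {L : Matrix m m R} (hL : L.IsSymm)
    (s : Finset ι) (a : ι → R) (d : ι → ℕ) : (∑ i ∈ s, a i • L ^ d i).IsSymm := by
  simp only [IsSymm, transpose_sum, transpose_smul, (hL.pow _).eq]

theorem commute_intervalIntegral_left {f : ℝ → Matrix m m ℝ} {x : Matrix m m ℝ}
    (hf : Continuous f) (hcomm : ∀ τ, Commute (f τ) x) (a b : ℝ) :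
    Commute (∫ τ in a..b, f τ) x := by
  let φ : Matrix m m ℝ →L[ℝ] Matrix m m ℝ :=
    LinearMap.toContinuousLinearMap (LinearMap.mulRight ℝ x - LinearMap.mulLeft ℝ x)
  have h : (∫ τ in a..b, f τ) * x - x * ∫ τ in a..b, f τ = ∫ τ in a..b, (f τ * x - x * f τ) :=
    (φ.intervalIntegral_comp_comm (hf.intervalIntegrable a b)).symm
  simp only [(hcomm _).eq, sub_self, intervalIntegral.integral_zero] at h
  exact sub_eq_zero.mp h

end Matrix

/- The `L∞` operator norm makes matrices a Banach algebra and induces the same topology as the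
entrywise norm, so derivatives can be transferred between the two. -/
section MatrixCalculus

variable {m : Type*} [Fintype m] [DecidableEq m] {f g : ℝ → Matrix m m ℝ} {f' g' : Matrix m m ℝ}
  {t : ℝ}

theorem HasDerivAt.matrix_mul (hf : HasDerivAt f f' t) (hg : HasDerivAt g g' t) :
    HasDerivAt (fun u => f u * g u) (f' * g t + f t * g') t := by
  open scoped Matrix.Norms.Operator in exact hf.mul hg

theorem HasDerivAt.matrix_exp_of_commute (hf : HasDerivAt f f' t)
    (hcomm : ∀ u, Commute (f t) (f u)) :
    HasDerivAt (fun u => NormedSpace.exp (f u)) (NormedSpace.exp (f t) * f') t := by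
  open scoped Matrix.Norms.Operator in exact hf.exp_of_commute hcomm

end MatrixCalculus

section CrossCovariance

variable {m : Type*} [Fintype m] [DecidableEq m] {H : ℝ → Matrix m m ℝ}

noncomputable def transitionMatrix (H : ℝ → Matrix m m ℝ) (t : ℝ) : Matrix m m ℝ :=
  exp (∫ τ in (0 : ℝ)..t, H τ)

noncomputable def crossCovariance (H : ℝ → Matrix m m ℝ) (g : ℝ → ℝ) (t₁ t₂ : ℝ) : Matrix m m ℝ :=
  transitionMatrix H t₁ *
    (∫ τ in (0 : ℝ)..t₁, g τ ^ 2 • ((transitionMatrix H τ)⁻¹ * (transitionMatrix H τ)⁻¹)) *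
    (transitionMatrix H t₂)ᵀ

theorem transitionMatrix_inv (H : ℝ → Matrix m m ℝ) (t : ℝ) :
    (transitionMatrix H t)⁻¹ = transitionMatrix (-H) t := by
  simp only [transitionMatrix, Pi.neg_apply, intervalIntegral.integral_neg, Matrix.exp_neg]

theorem transitionMatrix_mul_inv (H : ℝ → Matrix m m ℝ) (t : ℝ) :
    transitionMatrix H t * (transitionMatrix H t)⁻¹ = 1 :=
  mul_nonsing_inv _ ((isUnit_iff_isUnit_det _).mp (isUnit_exp _))

theorem transitionMatrix_isSymm (hH : Continuous H) (hsymm : ∀ t, (H t).IsSymm) (t : ℝ) :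
    (transitionMatrix H t).IsSymm :=
  (IsSymm.intervalIntegral hH hsymm 0 t).exp

variable (hH : Continuous H) (hcomm : ∀ s u, Commute (H s) (H u))
include hH hcomm

theorem commute_transitionMatrix (s t : ℝ) : Commute (H s) (transitionMatrix H t) :=
  (commute_intervalIntegral_left hH (fun τ => hcomm τ s) 0 t).symm.exp_right

theorem hasDerivAt_transitionMatrix (t : ℝ) :
    HasDerivAt (transitionMatrix H) (H t * transitionMatrix H t) t := by
  have hB : HasDerivAt (fun u => ∫ τ in (0 : ℝ)..u, H τ) (H t) t :=
    (hH.integral_hasStrictDerivAt 0 t).hasDerivAt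
  have hBB : ∀ u, Commute (∫ τ in (0 : ℝ)..t, H τ) (∫ τ in (0 : ℝ)..u, H τ) := fun u =>
    commute_intervalIntegral_left hH
      (fun τ => (commute_intervalIntegral_left hH (fun σ => hcomm σ τ) 0 u).symm) 0 t
  rw [(commute_transitionMatrix hH hcomm t t).eq]
  exact hB.matrix_exp_of_commute hBB

theorem continuous_transitionMatrix_inv : Continuous fun t => (transitionMatrix H t)⁻¹ := by
  simp only [transitionMatrix_inv]
  exact continuous_iff_continuousAt.mpr fun t =>
    (hasDerivAt_transitionMatrix hH.neg (fun s u => (hcomm s u).neg_left.neg_right) t).continuousAt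

theorem hasDerivAt_crossCovariance_left {g : ℝ → ℝ} (hg : Continuous g) (t₁ t₂ : ℝ) :
    HasDerivAt (fun u => crossCovariance H g u t₂)
      (H t₁ * crossCovariance H g t₁ t₂ +
        g t₁ ^ 2 • ((transitionMatrix H t₁)⁻¹ * (transitionMatrix H t₂)ᵀ)) t₁ := by
  have hinv := continuous_transitionMatrix_inv hH hcomm
  have hS : HasDerivAt
      (fun u => ∫ τ in (0 : ℝ)..u, g τ ^ 2 • ((transitionMatrix H τ)⁻¹ * (transitionMatrix H τ)⁻¹))
      (g t₁ ^ 2 • ((transitionMatrix H t₁)⁻¹ * (transitionMatrix H t₁)⁻¹)) t₁ :=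
    (((hg.pow 2).smul (hinv.matrix_mul hinv)).integral_hasStrictDerivAt 0 t₁).hasDerivAt
  refine (((hasDerivAt_transitionMatrix hH hcomm t₁).matrix_mul hS).matrix_mul
    (hasDerivAt_const t₁ (transitionMatrix H t₂)ᵀ)).congr_deriv ?_
  simp only [crossCovariance, mul_zero, add_zero, add_mul, mul_smul_comm, smul_mul_assoc, mul_assoc]
  rw [← mul_assoc (transitionMatrix H t₁) (transitionMatrix H t₁)⁻¹, transitionMatrix_mul_inv,
    one_mul]

theorem hasDerivAt_crossCovariance_right (hsymm : ∀ t, (H t).IsSymm) (g : ℝ → ℝ) (t₁ t₂ : ℝ) :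
    HasDerivAt (fun u => crossCovariance H g t₁ u) (crossCovariance H g t₁ t₂ * (H t₂)ᵀ) t₂ := by
  have hΨ : ∀ t, (transitionMatrix H t)ᵀ = transitionMatrix H t := fun t =>
    (transitionMatrix_isSymm hH hsymm t).eq
  simp only [crossCovariance, hΨ, (hsymm t₂).eq]
  rw [mul_assoc _ (transitionMatrix H t₂), ← (commute_transitionMatrix hH hcomm t₂ t₂).eq]
  simpa only [zero_mul, zero_add] using
    (hasDerivAt_const t₂ _).matrix_mul (hasDerivAt_transitionMatrix hH hcomm t₂)

end CrossCovariance

theorem cross_covariance_partial_derivs_le_general {n K : ℕ}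
    (L : Matrix (Fin n) (Fin n) ℝ) (hL : L.IsSymm)
    (h : Fin (K + 1) → ℝ → ℝ) (hh : ∀ k, Continuous (h k))
    (g : ℝ → ℝ) (hg : Continuous g) :
    let H : ℝ → Matrix (Fin n) (Fin n) ℝ := fun t => ∑ k : Fin (K + 1), h k t • L ^ (k : ℕ)
    let Ψ : ℝ → Matrix (Fin n) (Fin n) ℝ := fun t => exp (∫ τ in (0:ℝ)..t, H τ)
    let Kc : ℝ → ℝ → Matrix (Fin n) (Fin n) ℝ := fun t₁ t₂ =>
      Ψ t₁ * (∫ τ in (0:ℝ)..t₁, g τ ^ 2 • ((Ψ τ)⁻¹ * (Ψ τ)⁻¹)) * (Ψ t₂)ᵀ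
    (∀ t₁ t₂ : ℝ, t₁ < t₂ →
        HasDerivAt (fun u : ℝ => Kc u t₂)
          (H t₁ * Kc t₁ t₂ + g t₁ ^ 2 • ((Ψ t₁)⁻¹ * (Ψ t₂)ᵀ)) t₁) ∧
      (∀ t₁ t₂ : ℝ, t₁ < t₂ →
        HasDerivAt (fun u : ℝ => Kc t₁ u) (Kc t₁ t₂ * (H t₂)ᵀ) t₂) := by
  intro H Ψ Kc
  have hH : Continuous H := continuous_finsetSum _ fun k _ => (hh k).smul continuous_const
  have hcomm : ∀ s u, Commute (H s) (H u) := fun s u =>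
    Commute.sum_smul_pow_sum_smul_pow L _ _ _ _ _ _
  have hsymm : ∀ t, (H t).IsSymm := fun t => hL.sum_smul_pow _ _ _
  exact ⟨fun t₁ t₂ _ => hasDerivAt_crossCovariance_left hH hcomm hg t₁ t₂,
    fun t₁ t₂ _ => hasDerivAt_crossCovariance_right hH hcomm hsymm g t₁ t₂⟩

/-- Partial derivatives of the conditional cross covariance
`K(t₁,t₂) = Ψ_{t₁} (∫_0^{t₁} g(τ)² • Ψ_τ⁻¹ Ψ_τ⁻¹ dτ) Ψ_{t₂}ᵀ` (the case `t₁ ≤ t₂`) of the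
topological SDE `dY = H_t Y dt + g_t dW`: (i) for fixed `t₂` and `t₁ < t₂`, in the first
variable the derivative is `H_{t₁} K(t₁,t₂) + g(t₁)² • (Ψ_{t₁}⁻¹ Ψ_{t₂}ᵀ)`; (ii) for fixed
`t₁` and `t₂ > t₁`, in the second variable the derivative is `K(t₁,t₂) H_{t₂}ᵀ`. -/
theorem cross_covariance_partial_derivs_le {n K : ℕ} (hn : 1 ≤ n) (hK : 1 ≤ K)
    (L : Matrix (Fin n) (Fin n) ℝ) (hL : L.IsSymm)
    (h : Fin (K + 1) → ℝ → ℝ) (hh : ∀ k, Continuous (h k))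
    (g : ℝ → ℝ) (hg : Continuous g) :
    let H : ℝ → Matrix (Fin n) (Fin n) ℝ := fun t => ∑ k : Fin (K + 1), h k t • L ^ (k : ℕ)
    let Ψ : ℝ → Matrix (Fin n) (Fin n) ℝ := fun t => exp (∫ τ in (0:ℝ)..t, H τ)
    let Kc : ℝ → ℝ → Matrix (Fin n) (Fin n) ℝ := fun t₁ t₂ =>
      Ψ t₁ * (∫ τ in (0:ℝ)..t₁, g τ ^ 2 • ((Ψ τ)⁻¹ * (Ψ τ)⁻¹)) * (Ψ t₂)ᵀ
    (∀ t₁ t₂ : ℝ, t₁ < t₂ →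
        HasDerivAt (fun u : ℝ => Kc u t₂)
          (H t₁ * Kc t₁ t₂ + g t₁ ^ 2 • ((Ψ t₁)⁻¹ * (Ψ t₂)ᵀ)) t₁) ∧
      (∀ t₁ t₂ : ℝ, t₁ < t₂ →
        HasDerivAt (fun u : ℝ => Kc t₁ u) (Kc t₁ t₂ * (H t₂)ᵀ) t₂) :=
  cross_covariance_partial_derivs_le_general L hL h hh g hg
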